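/- arXiv:1509.07928 — 4 statements merged into one kernel-verified Lean document; each statement's English description precedes it below -/
import Mathlib

section
/- The cumulative distribution function of the standard normal distribution, Φ(a) = ∫_{-∞}^a (1/√(2π)) exp(-ν²/2) dν, is a log-concave function on the real line. -/
/-!
With `φ` the standard normal density, `Φ' = φ` and `φ' = -x φ`, so the numerator of
`(log Φ)'' = (-x φ Φ - φ²) / Φ²` is `-φ (x Φ + φ)`. It is nonpositive by the Mills-type bound
`-a Φ(a) = ∫_{x ≤ a} (-a) φ(x) dx ≤ ∫_{x ≤ a} (-x) φ(x) dx = φ(a)`.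
-/

open MeasureTheory Set Filter Topology ProbabilityTheory Real
open scoped NNReal

theorem concaveOn_log_of_hasDerivAt {F f f' : ℝ → ℝ} (hF : ∀ x, 0 < F x)
    (hFf : ∀ x, HasDerivAt F (f x) x) (hff' : ∀ x, HasDerivAt f (f' x) x)
    (hle : ∀ x, f' x * F x ≤ f x ^ 2) :
    ConcaveOn ℝ univ (fun x => log (F x)) := by
  have hlog : ∀ x, HasDerivAt (fun y => log (F y)) (f x / F x) x :=
    fun x => (hFf x).log (hF x).ne'
  refine concaveOn_of_hasDerivWithinAt2_nonpos convex_univ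
    (fun x _ => (hlog x).continuousAt.continuousWithinAt)
    (fun x _ => (hlog x).hasDerivWithinAt)
    (fun x _ => ((hff' x).div (hFf x) (hF x).ne').hasDerivWithinAt) fun x _ => ?_
  exact div_nonpos_of_nonpos_of_nonneg (by nlinarith [hle x]) (sq_nonneg _)

theorem hasDerivAt_integral_Iic {E : Type*} [NormedAddCommGroup E] [NormedSpace ℝ E]
    [CompleteSpace E] {f : ℝ → E} {a : ℝ} (hf : Integrable f) (hc : ContinuousAt f a) :
    HasDerivAt (fun b => ∫ x in Iic b, f x) (f a) a := by
  have h : (fun b => ∫ x in Iic b, f x) = fun b => (∫ x in Iic 0, f x) + ∫ x in 0..b, f x := by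
    funext b
    rw [← intervalIntegral.integral_Iic_sub_Iic hf.integrableOn hf.integrableOn,
      add_sub_cancel]
  rw [h]
  exact (intervalIntegral.integral_hasDerivAt_right hf.intervalIntegrable
    hf.aestronglyMeasurable.stronglyMeasurableAtFilter hc).const_add _

theorem setIntegral_Iic_pos {f : ℝ → ℝ} {a : ℝ} (hf : IntegrableOn f (Iic a))
    (hpos : ∀ x, 0 < f x) : 0 < ∫ x in Iic a, f x := by
  rw [setIntegral_pos_iff_support_of_nonneg_ae (.of_forall fun x => (hpos x).le) hf,
    Function.support_eq_univ fun x => (hpos x).ne', univ_inter, volume_Iic]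
  exact ENNReal.zero_lt_top

namespace ProbabilityTheory

theorem hasDerivAt_gaussianPDFReal (μ : ℝ) (v : ℝ≥0) (x : ℝ) :
    HasDerivAt (gaussianPDFReal μ v) (-((x - μ) / v) * gaussianPDFReal μ v x) x := by
  have h : HasDerivAt (fun y => -(y - μ) ^ 2 / (2 * v)) (-((x - μ) / v)) x :=
    (((hasDerivAt_id' x).sub_const μ).fun_pow 2).fun_neg.div_const _ |>.congr_deriv (by ring)
  exact (h.exp.const_mul (√(2 * π * v))⁻¹).congr_deriv (by rw [gaussianPDFReal]; ring)

theorem hasDerivAt_gaussianPDFReal_zero_one (x : ℝ) :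
    HasDerivAt (gaussianPDFReal 0 1) (-x * gaussianPDFReal 0 1 x) x := by
  simpa using hasDerivAt_gaussianPDFReal 0 1 x

theorem integrable_neg_mul_gaussianPDFReal_zero_one :
    Integrable fun x => -x * gaussianPDFReal 0 1 x := by
  convert (integrable_mul_exp_neg_mul_sq (b := 1 / 2) (by norm_num)).const_mul (-(√(2 * π))⁻¹)
    using 2 with x
  simp only [gaussianPDFReal, NNReal.coe_one, mul_one, sub_zero]
  ring_nf

theorem setIntegral_Iic_neg_mul_gaussianPDFReal_zero_one (a : ℝ) :
    ∫ x in Iic a, -x * gaussianPDFReal 0 1 x = gaussianPDFReal 0 1 a := by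
  have hderiv (x : ℝ) (_ : x ∈ Iic a) := hasDerivAt_gaussianPDFReal_zero_one x
  have hint := integrable_neg_mul_gaussianPDFReal_zero_one.integrableOn (s := Iic a)
  have htendsto : Tendsto (gaussianPDFReal 0 1) atBot (𝓝 0) :=
    tendsto_zero_of_hasDerivAt_of_integrableOn_Iic hderiv hint
      (integrable_gaussianPDFReal 0 1).integrableOn
  simpa using integral_Iic_of_hasDerivAt_of_tendsto' hderiv hint htendsto

theorem neg_mul_integral_Iic_gaussianPDFReal_le (a : ℝ) :
    -a * ∫ x in Iic a, gaussianPDFReal 0 1 x ≤ gaussianPDFReal 0 1 a := calc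
  -a * ∫ x in Iic a, gaussianPDFReal 0 1 x = ∫ x in Iic a, -a * gaussianPDFReal 0 1 x :=
    (integral_const_mul _ _).symm
  _ ≤ ∫ x in Iic a, -x * gaussianPDFReal 0 1 x :=
    setIntegral_mono_on ((integrable_gaussianPDFReal 0 1).const_mul _).integrableOn
      integrable_neg_mul_gaussianPDFReal_zero_one.integrableOn measurableSet_Iic
      fun x hx => mul_le_mul_of_nonneg_right (neg_le_neg hx) (gaussianPDFReal_nonneg 0 1 x)
  _ = gaussianPDFReal 0 1 a := setIntegral_Iic_neg_mul_gaussianPDFReal_zero_one a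

end ProbabilityTheory

/-- The standard normal CDF is log-concave on ℝ. -/
theorem stmt0 (Φ : ℝ → ℝ)
    (hΦ : ∀ a, Φ a = ∫ ν in Set.Iic a,
      (1 / Real.sqrt (2 * Real.pi)) * Real.exp (-ν ^ 2 / 2)) :
    ConcaveOn ℝ Set.univ (fun a => Real.log (Φ a)) := by
  have hΦ_eq : Φ = fun a => ∫ x in Iic a, gaussianPDFReal 0 1 x := by
    funext a
    simp [hΦ, gaussianPDFReal]
  have hφ := integrable_gaussianPDFReal 0 1
  subst hΦ_eq
  refine concaveOn_log_of_hasDerivAt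
    (fun a => setIntegral_Iic_pos hφ.integrableOn fun x => gaussianPDFReal_pos 0 1 x one_ne_zero)
    (fun a => hasDerivAt_integral_Iic hφ (hasDerivAt_gaussianPDFReal_zero_one a).continuousAt)
    hasDerivAt_gaussianPDFReal_zero_one fun x => ?_
  calc -x * gaussianPDFReal 0 1 x * ∫ y in Iic x, gaussianPDFReal 0 1 y
      = (-x * ∫ y in Iic x, gaussianPDFReal 0 1 y) * gaussianPDFReal 0 1 x := by ring
    _ ≤ gaussianPDFReal 0 1 x * gaussianPDFReal 0 1 x :=
      mul_le_mul_of_nonneg_right (neg_mul_integral_Iic_gaussianPDFReal_le x)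
        (gaussianPDFReal_nonneg 0 1 x)
    _ = gaussianPDFReal 0 1 x ^ 2 := (sq _).symm
end

section
/- For fixed real numbers ℓ < u, the function c ↦ Φ(u − c) − Φ(ℓ − c) is strictly positive and log-concave in c ∈ ℝ, where Φ is the standard normal CDF. -/
/-!
With `γ(t) = exp (-t²/2)` and `N(c) = ∫_{ℓ-c}^{u-c} γ`, log-concavity of `N` is the inequality
`N N'' ≤ N'²`, i.e. `I (a γ(a) - b γ(b)) ≤ (γ(a) - γ(b))²` for `I = ∫_a^b γ`: the standard
normal truncated to `[a, b]` has variance at most `1`. For fixed `a`, the defect `F(b)` between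
the two sides vanishes at `b = a` and satisfies `F'(b) = γ(b) G(b)`, where `G(a) = 0` and
`G'(b) = 2 (γ(a) - b I)`. Since `b I` is increasing once positive, `G'`, hence `G`, hence `F'`
changes sign at most once, from `+` to `-`. So `F` increases and then decreases, and it stays
nonnegative because its limit at `+∞` is `γ(a) (γ(a) - a ∫_a^∞ γ) ≥ 0` (Mills' ratio bound).
-/

open MeasureTheory Set Filter Topology Real

section SignChange

def NonposAfterNeg (f : ℝ → ℝ) (a : ℝ) : Prop :=
  ∀ ⦃x y⦄, a ≤ x → x ≤ y → f x < 0 → f y ≤ 0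

variable {f f' : ℝ → ℝ} {a : ℝ}

lemma antitoneOn_Ici_of_hasDerivAt (hf : ∀ x, HasDerivAt f (f' x) x) {x : ℝ}
    (hf' : ∀ y, x ≤ y → f' y ≤ 0) : AntitoneOn f (Ici x) :=
  antitoneOn_of_hasDerivWithinAt_nonpos (convex_Ici x)
    (fun y _ => (hf y).continuousAt.continuousWithinAt) (fun y _ => (hf y).hasDerivWithinAt)
    (fun y hy => hf' y (interior_subset hy))

lemma NonposAfterNeg.of_hasDerivAt (h' : NonposAfterNeg f' a) (hf : ∀ x, HasDerivAt f (f' x) x)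
    (ha : 0 ≤ f a) : NonposAfterNeg f a := by
  intro x y hax hxy hfx
  have hax' : a < x := lt_of_le_of_ne hax (by rintro rfl; linarith)
  obtain ⟨η, hη, hslope⟩ := exists_hasDerivAt_eq_slope f f' hax'
    (fun z _ => (hf z).continuousAt.continuousWithinAt) (fun z _ => hf z)
  have hη_neg : f' η < 0 := by
    rw [hslope]
    exact div_neg_of_neg_of_pos (by linarith) (by linarith)
  have hanti := antitoneOn_Ici_of_hasDerivAt hf fun z hz => h' hη.1.le hz hη_neg
  exact (hanti (mem_Ici.2 hη.2.le) (mem_Ici.2 (hη.2.le.trans hxy)) hxy).trans hfx.le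

lemma NonposAfterNeg.nonneg_of_hasDerivAt (h' : NonposAfterNeg f' a)
    (hf : ∀ x, HasDerivAt f (f' x) x) (ha : 0 ≤ f a) {L : ℝ} (hlim : Tendsto f atTop (𝓝 L))
    (hL : 0 ≤ L) {b : ℝ} (hab : a ≤ b) : 0 ≤ f b := by
  by_cases hneg : ∃ x ∈ Icc a b, f' x < 0
  · obtain ⟨x, hx, hfx⟩ := hneg
    have hanti := antitoneOn_Ici_of_hasDerivAt hf fun y hy => h' hx.1 hy hfx
    refine hL.trans (le_of_tendsto hlim ?_)
    filter_upwards [eventually_ge_atTop b] with y hy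
    exact hanti (mem_Ici.2 hx.2) (mem_Ici.2 (hx.2.trans hy)) hy
  · push Not at hneg
    have hmono : MonotoneOn f (Icc a b) :=
      monotoneOn_of_hasDerivWithinAt_nonneg (convex_Icc a b)
        (fun y _ => (hf y).continuousAt.continuousWithinAt) (fun y _ => (hf y).hasDerivWithinAt)
        (fun y hy => hneg y (interior_subset hy))
    exact ha.trans (hmono (left_mem_Icc.2 hab) (right_mem_Icc.2 hab) hab)

end SignChange

noncomputable def gauss (t : ℝ) : ℝ := exp (-t ^ 2 / 2)

noncomputable def gaussMass (a b : ℝ) : ℝ := ∫ t in a..b, gauss t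

lemma gauss_pos (t : ℝ) : 0 < gauss t := exp_pos _

lemma continuous_gauss : Continuous gauss := by
  unfold gauss; fun_prop

lemma gauss_eq_exp_neg_mul_sq : gauss = fun t => exp (-(1 / 2) * t ^ 2) := by
  ext t; rw [gauss]; ring_nf

lemma hasDerivAt_gauss (t : ℝ) : HasDerivAt gauss (-t * gauss t) t := by
  have h : HasDerivAt (fun t : ℝ => -(1 / 2) * t ^ 2) (-t) t :=
    ((hasDerivAt_pow 2 t).const_mul _).congr_deriv (by ring)
  rw [gauss_eq_exp_neg_mul_sq]
  exact h.exp.congr_deriv (mul_comm _ _)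

lemma hasDerivAt_mul_gauss (t : ℝ) :
    HasDerivAt (fun t => t * gauss t) ((1 - t ^ 2) * gauss t) t :=
  ((hasDerivAt_id t).mul (hasDerivAt_gauss t)).congr_deriv (by simp only [id_eq]; ring)

lemma integrable_gauss : Integrable gauss :=
  gauss_eq_exp_neg_mul_sq ▸ integrable_exp_neg_mul_sq (by norm_num)

lemma integrable_mul_gauss : Integrable fun t => t * gauss t :=
  gauss_eq_exp_neg_mul_sq ▸ integrable_mul_exp_neg_mul_sq (by norm_num)

lemma tendsto_rpow_mul_gauss_atTop (s : ℝ) :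
    Tendsto (fun t => t ^ s * gauss t) atTop (𝓝 0) := by
  rw [gauss_eq_exp_neg_mul_sq]
  refine (rpow_mul_exp_neg_mul_sq_isLittleO_exp_neg (by norm_num) s).trans_tendsto ?_
  exact tendsto_exp_atBot.comp (tendsto_id.const_mul_atTop_of_neg (by norm_num))

lemma tendsto_gauss_atTop : Tendsto gauss atTop (𝓝 0) := by
  simpa using tendsto_rpow_mul_gauss_atTop 0

lemma hasDerivAt_gaussMass (a x : ℝ) : HasDerivAt (gaussMass a) (gauss x) x :=
  (continuous_gauss.integral_hasStrictDerivAt a x).hasDerivAt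

lemma strictMono_gaussMass (a : ℝ) : StrictMono (gaussMass a) :=
  strictMono_of_hasDerivAt_pos (hasDerivAt_gaussMass a) gauss_pos

lemma gaussMass_self (a : ℝ) : gaussMass a a = 0 := intervalIntegral.integral_same

lemma gaussMass_pos {a b : ℝ} (hab : a < b) : 0 < gaussMass a b :=
  gaussMass_self a ▸ strictMono_gaussMass a hab

lemma gaussMass_nonneg {a b : ℝ} (hab : a ≤ b) : 0 ≤ gaussMass a b :=
  gaussMass_self a ▸ (strictMono_gaussMass a).monotone hab

lemma gaussMass_eq_sub (a b : ℝ) : gaussMass a b = gaussMass 0 b - gaussMass 0 a :=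
  (intervalIntegral.integral_interval_sub_left (integrable_gauss.intervalIntegrable)
    (integrable_gauss.intervalIntegrable)).symm

lemma hasDerivAt_gaussMass_sub (ℓ u c : ℝ) :
    HasDerivAt (fun c => gaussMass (ℓ - c) (u - c)) (gauss (ℓ - c) - gauss (u - c)) c := by
  rw [show (fun c => gaussMass (ℓ - c) (u - c)) = fun c => gaussMass 0 (u - c) - gaussMass 0 (ℓ - c)
    from funext fun c => gaussMass_eq_sub _ _]
  exact (((hasDerivAt_gaussMass 0 (u - c)).comp_const_sub u c).sub
    ((hasDerivAt_gaussMass 0 (ℓ - c)).comp_const_sub ℓ c)).congr_deriv (by ring)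

lemma hasDerivAt_gauss_sub (k c : ℝ) :
    HasDerivAt (fun c => gauss (k - c)) ((k - c) * gauss (k - c)) c :=
  ((hasDerivAt_gauss (k - c)).comp_const_sub k c).congr_deriv (by ring)

lemma tendsto_gaussMass_atTop (a : ℝ) :
    Tendsto (gaussMass a) atTop (𝓝 (∫ t in Ioi a, gauss t)) :=
  intervalIntegral_tendsto_integral_Ioi a integrable_gauss.integrableOn tendsto_id

lemma integral_Ioi_mul_gauss (a : ℝ) : ∫ t in Ioi a, t * gauss t = gauss a := by
  have hlim : Tendsto (fun t => -gauss t) atTop (𝓝 0) := by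
    simpa using tendsto_gauss_atTop.neg
  simpa using integral_Ioi_of_hasDerivAt_of_tendsto'
    (fun x _ => ((hasDerivAt_gauss x).neg).congr_deriv (by ring))
    integrable_mul_gauss.integrableOn hlim

lemma mul_integral_Ioi_gauss_le (a : ℝ) : a * ∫ t in Ioi a, gauss t ≤ gauss a := by
  rw [← integral_Ioi_mul_gauss a, ← integral_const_mul]
  exact setIntegral_mono_on (integrable_gauss.const_mul a).integrableOn
    integrable_mul_gauss.integrableOn measurableSet_Ioi
    fun t ht => mul_le_mul_of_nonneg_right (le_of_lt ht) (gauss_pos t).le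

/-- Equals `gaussMass a b ^ 2 * (1 - σ²)`, with `σ²` the variance of the standard normal truncated
to `[a, b]`: multiplied by `gaussMass a b`, its first moment is `gauss a - gauss b` and (by parts)
its second moment is `gaussMass a b + (a * gauss a - b * gauss b)`. -/
noncomputable def varDefect (a b : ℝ) : ℝ :=
  (gauss a - gauss b) ^ 2 - gaussMass a b * (a * gauss a - b * gauss b)

noncomputable def varDefectRate (a b : ℝ) : ℝ :=
  2 * b * gauss a - b * gauss b - a * gauss a - (b ^ 2 - 1) * gaussMass a b

lemma varDefect_self (a : ℝ) : varDefect a a = 0 := by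
  simp [varDefect, gaussMass_self]

lemma varDefectRate_self (a : ℝ) : varDefectRate a a = 0 := by
  simp only [varDefectRate, gaussMass_self]; ring

lemma hasDerivAt_varDefect (a b : ℝ) :
    HasDerivAt (varDefect a) (gauss b * varDefectRate a b) b := by
  have h := (((hasDerivAt_gauss b).const_sub (gauss a)).pow 2).sub
    ((hasDerivAt_gaussMass a b).mul ((hasDerivAt_mul_gauss b).const_sub (a * gauss a)))
  exact h.congr_deriv (by simp only [varDefectRate]; push_cast; ring)

lemma hasDerivAt_varDefectRate (a b : ℝ) :
    HasDerivAt (varDefectRate a) (2 * (gauss a - b * gaussMass a b)) b := by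
  have h := ((((hasDerivAt_id b).const_mul 2).mul_const (gauss a)).sub
    (hasDerivAt_mul_gauss b)).sub_const (a * gauss a) |>.sub
    (((hasDerivAt_pow 2 b).sub_const 1).mul (hasDerivAt_gaussMass a b))
  exact h.congr_deriv (by simp only [Nat.cast_ofNat]; ring)

lemma tendsto_varDefect_atTop (a : ℝ) :
    Tendsto (varDefect a) atTop (𝓝 (gauss a * (gauss a - a * ∫ t in Ioi a, gauss t))) := by
  have htγ : Tendsto (fun t => t * gauss t) atTop (𝓝 0) := by
    simpa using tendsto_rpow_mul_gauss_atTop 1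
  have h := ((tendsto_const_nhds (x := gauss a)).sub tendsto_gauss_atTop |>.pow 2).sub
    ((tendsto_gaussMass_atTop a).mul ((tendsto_const_nhds (x := a * gauss a)).sub htγ))
  rw [show gauss a * (gauss a - a * ∫ t in Ioi a, gauss t)
      = (gauss a - 0) ^ 2 - (∫ t in Ioi a, gauss t) * (a * gauss a - 0) by ring]
  exact h

lemma nonposAfterNeg_deriv_varDefectRate (a : ℝ) :
    NonposAfterNeg (fun b => 2 * (gauss a - b * gaussMass a b)) a := by
  intro x y hax hxy hx
  have hmass := gaussMass_nonneg hax
  have hx_pos : 0 < x := by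
    by_contra! hx_nonpos
    nlinarith [gauss_pos a, mul_nonpos_of_nonpos_of_nonneg hx_nonpos hmass]
  have hmono : x * gaussMass a x ≤ y * gaussMass a y :=
    mul_le_mul hxy ((strictMono_gaussMass a).monotone hxy) hmass (hx_pos.le.trans hxy)
  linarith

lemma varDefect_nonneg {a b : ℝ} (hab : a ≤ b) : 0 ≤ varDefect a b := by
  have hrate : NonposAfterNeg (varDefectRate a) a :=
    (nonposAfterNeg_deriv_varDefectRate a).of_hasDerivAt (hasDerivAt_varDefectRate a)
      (varDefectRate_self a).ge
  have hderiv : NonposAfterNeg (fun b => gauss b * varDefectRate a b) a := fun x y hax hxy hx =>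
    mul_nonpos_of_nonneg_of_nonpos (gauss_pos y).le
      (hrate hax hxy (neg_of_mul_neg_right hx (gauss_pos x).le))
  have hlim_nonneg : 0 ≤ gauss a * (gauss a - a * ∫ t in Ioi a, gauss t) :=
    mul_nonneg (gauss_pos a).le (sub_nonneg.2 (mul_integral_Ioi_gauss_le a))
  exact hderiv.nonneg_of_hasDerivAt (hasDerivAt_varDefect a) (varDefect_self a).ge
    (tendsto_varDefect_atTop a) hlim_nonneg hab

theorem concaveOn_log_gaussMass_sub {ℓ u : ℝ} (hlu : ℓ < u) :
    ConcaveOn ℝ univ fun c => log (gaussMass (ℓ - c) (u - c)) := by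
  set N := fun c => gaussMass (ℓ - c) (u - c)
  set N' := fun c => gauss (ℓ - c) - gauss (u - c)
  set N'' := fun c => (ℓ - c) * gauss (ℓ - c) - (u - c) * gauss (u - c)
  have hN_pos (c : ℝ) : 0 < N c := gaussMass_pos (by linarith)
  have hN (c : ℝ) : HasDerivAt N (N' c) c := hasDerivAt_gaussMass_sub ℓ u c
  have hN' (c : ℝ) : HasDerivAt N' (N'' c) c :=
    (hasDerivAt_gauss_sub ℓ c).sub (hasDerivAt_gauss_sub u c)
  have hvar (c : ℝ) : N'' c * N c - N' c * N' c ≤ 0 := by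
    have := varDefect_nonneg (a := ℓ - c) (b := u - c) (by linarith)
    simp only [varDefect] at this
    linarith
  refine concaveOn_of_hasDerivWithinAt2_nonpos convex_univ
    (fun c _ => ((hN c).log (hN_pos c).ne').continuousAt.continuousWithinAt)
    (f' := fun c => N' c / N c) (f'' := fun c => (N'' c * N c - N' c * N' c) / N c ^ 2) ?_ ?_
    (fun c _ => div_nonpos_of_nonpos_of_nonneg (hvar c) (sq_nonneg _))
  · intro c _
    rw [interior_univ, hasDerivWithinAt_univ]
    exact (hN c).log (hN_pos c).ne'
  · intro c _
    rw [interior_univ, hasDerivWithinAt_univ]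
    exact (hN' c).div (hN c) (hN_pos c).ne'

/-- For ℓ < u, the function c ↦ Φ(u − c) − Φ(ℓ − c) is strictly positive and
log-concave in c, where Φ is the standard normal CDF. -/
theorem stmt1 (Φ : ℝ → ℝ)
    (hΦ : ∀ a, Φ a = ∫ ν in Set.Iic a,
      (1 / Real.sqrt (2 * Real.pi)) * Real.exp (-ν ^ 2 / 2))
    (ℓ u : ℝ) (hlu : ℓ < u) :
    (∀ c : ℝ, 0 < Φ (u - c) - Φ (ℓ - c)) ∧
    ConcaveOn ℝ Set.univ (fun c : ℝ => Real.log (Φ (u - c) - Φ (ℓ - c))) := by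
  set C := 1 / √(2 * π)
  have hC : 0 < C := by positivity
  have hΦ_sub (x y : ℝ) : Φ y - Φ x = C * gaussMass x y := by
    have hint (z : ℝ) : IntegrableOn (fun t => C * gauss t) (Iic z) :=
      (integrable_gauss.const_mul C).integrableOn
    rw [hΦ, hΦ]
    exact (intervalIntegral.integral_Iic_sub_Iic (hint x) (hint y)).trans
      (intervalIntegral.integral_const_mul C gauss)
  have hmass (c : ℝ) : 0 < gaussMass (ℓ - c) (u - c) := gaussMass_pos (by linarith)
  refine ⟨fun c => hΦ_sub _ _ ▸ mul_pos hC (hmass c), ?_⟩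
  have hlog : (fun c => log (Φ (u - c) - Φ (ℓ - c)))
      = fun c => log (gaussMass (ℓ - c) (u - c)) + log C := by
    ext c
    rw [hΦ_sub, log_mul hC.ne' (hmass c).ne', add_comm]
  rw [hlog]
  exact (concaveOn_log_gaussMass_sub hlu).add_const _
end

section
/- The convolution of two log-concave, nonnegative, integrable functions on ℝ is log-concave. -/
/-!
For fixed `x, y, t` the three integrands `f (x - ·) * g`, `f (y - ·) * g` and
`f ((t x + (1 - t) y) - ·) * g` satisfy the hypothesis of the Prékopa–Leindler inequality, because
`(w, v) ↦ f (w - v) g v` is log-concave on `ℝ²`; the theorem is that inequality. Prékopa–Leindler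
on `ℝ` follows from the one-dimensional Brunn–Minkowski inequality `|A| + |B| ≤ |A + B|` applied
to superlevel sets and integrated through the layer-cake formula. An integrable log-concave
function is bounded, which keeps all the integrals finite.
-/

open MeasureTheory Set
open scoped Pointwise ENNReal

def IsLogConcave (f : ℝ → ℝ) : Prop :=
  ∀ x y : ℝ, ∀ t ∈ Icc (0 : ℝ) 1, f x ^ t * f y ^ (1 - t) ≤ f (t * x + (1 - t) * y)

theorem Real.min_one_le_rpow {a r : ℝ} (ha : 0 ≤ a) (hr0 : 0 ≤ r) (hr1 : r ≤ 1) :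
    min a 1 ≤ a ^ r := by
  rcases le_total a 1 with h | h
  · exact (min_le_left _ _).trans (Real.self_le_rpow_of_le_one ha h hr1)
  · exact (min_le_right _ _).trans (Real.one_le_rpow h hr0)

namespace IsLogConcave

variable {f : ℝ → ℝ}

theorem min_le (hf0 : ∀ x, 0 ≤ f x) (hf : IsLogConcave f) (x y : ℝ) {t : ℝ}
    (ht : t ∈ Icc (0 : ℝ) 1) : min (f x) (f y) ≤ f (t * x + (1 - t) * y) := by
  rcases (le_min (hf0 x) (hf0 y)).eq_or_lt with hm | hm
  · rw [← hm]
    exact hf0 _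
  calc min (f x) (f y) = min (f x) (f y) ^ t * min (f x) (f y) ^ (1 - t) := by
        rw [← Real.rpow_add hm, add_sub_cancel, Real.rpow_one]
    _ ≤ f x ^ t * f y ^ (1 - t) :=
      mul_le_mul (Real.rpow_le_rpow hm.le (min_le_left _ _) ht.1)
        (Real.rpow_le_rpow hm.le (min_le_right _ _) (by linarith [ht.2]))
        (Real.rpow_nonneg hm.le _) (Real.rpow_nonneg (hf0 x) _)
    _ ≤ f (t * x + (1 - t) * y) := hf x y t ht

theorem convex_setOf_lt (hf0 : ∀ x, 0 ≤ f x) (hf : IsLogConcave f) (u : ℝ) :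
    Convex ℝ {v | u < f v} := by
  intro p hp q hq a b ha hb hab
  obtain rfl : b = 1 - a := by linarith
  exact (lt_min hp hq).trans_le (hf.min_le hf0 p q ⟨ha, by linarith⟩)

theorem measurable (hf0 : ∀ x, 0 ≤ f x) (hf : IsLogConcave f) : Measurable f :=
  measurable_of_Ioi fun u => ((hf.convex_setOf_lt hf0 u).ordConnected).measurableSet

/-- On the segment from `x` halfway to `e`, log-concavity gives `f ≥ √(f x) · min (f e) 1`. -/
theorem sqrt_mul_abs_sub_le_integral (hf0 : ∀ x, 0 ≤ f x) (hfi : Integrable f)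
    (hf : IsLogConcave f) {x : ℝ} (hx : 1 ≤ f x) (e : ℝ) :
    √(f x) * min (f e) 1 * (|e - x| / 2) ≤ ∫ v, f v := by
  have hlow : ∀ y ∈ uIcc x ((x + e) / 2), √(f x) * min (f e) 1 ≤ f y := by
    intro y hy
    rw [← segment_eq_uIcc] at hy
    obtain ⟨a, b, ha, hb, hab, rfl⟩ := hy
    have hy : a • x + b • ((x + e) / 2) = (1 - b / 2) * x + (1 - (1 - b / 2)) * e := by
      rw [smul_eq_mul, smul_eq_mul, ← hab]; ring
    rw [hy]
    have hsqrt : √(f x) ≤ f x ^ (1 - b / 2) := by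
      rw [Real.sqrt_eq_rpow]
      exact Real.rpow_le_rpow_of_exponent_le hx (by linarith)
    calc √(f x) * min (f e) 1 ≤ f x ^ (1 - b / 2) * f e ^ (1 - (1 - b / 2)) :=
          mul_le_mul hsqrt (Real.min_one_le_rpow (hf0 e) (by linarith) (by linarith))
            (le_min (hf0 e) zero_le_one) (by positivity)
      _ ≤ _ := hf _ _ _ ⟨by linarith, by linarith⟩
  have hlen : volume.real (uIcc x ((x + e) / 2)) = |e - x| / 2 := by
    rw [Real.volume_real_interval, show (x + e) / 2 - x = (e - x) / 2 by ring, abs_div,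
      abs_two]
  calc √(f x) * min (f e) 1 * (|e - x| / 2)
      ≤ ∫ v in uIcc x ((x + e) / 2), f v := by
        rw [← hlen]
        exact setIntegral_ge_of_const_le_real measurableSet_uIcc
          isCompact_uIcc.measure_lt_top.ne hlow hfi.integrableOn
    _ ≤ ∫ v, f v := setIntegral_le_integral hfi (Filter.Eventually.of_forall hf0)

theorem bddAbove_of_integrable (hf0 : ∀ x, 0 ≤ f x) (hfi : Integrable f)
    (hf : IsLogConcave f) : BddAbove (range f) := by
  rcases {v | 0 < f v}.subsingleton_or_nontrivial with hpos | ⟨a, ha, b, hb, hab⟩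
  · refine ((hpos.finite.image f).insert 0).bddAbove.mono ?_
    rintro _ ⟨v, rfl⟩
    rcases (hf0 v).eq_or_lt with h | h
    · exact Or.inl h.symm
    · exact Or.inr ⟨v, h, rfl⟩
  set m := min (min (f a) (f b)) 1
  have hm : 0 < m := lt_min (lt_min ha hb) one_pos
  have hc : 0 < m * (|b - a| / 4) := by
    have : 0 < |b - a| := abs_pos.2 (sub_ne_zero.2 hab.symm)
    positivity
  refine ⟨max 1 (((∫ v, f v) / (m * (|b - a| / 4))) ^ 2), ?_⟩
  rintro _ ⟨x, rfl⟩
  rcases le_or_gt (f x) 1 with hx | hx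
  · exact le_max_of_le_left hx
  have hsqrt : √(f x) * (m * (|b - a| / 4)) ≤ ∫ v, f v := by
    -- one of `a`, `b` lies at distance at least `|b - a| / 2` from `x`
    obtain ⟨e, hme, hex⟩ : ∃ e, m ≤ min (f e) 1 ∧ |b - a| / 2 ≤ |e - x| := by
      have htri : |b - a| ≤ |a - x| + |b - x| := by
        simpa [add_comm] using abs_sub (b - x) (a - x)
      rcases le_total (|b - a| / 2) |a - x| with h | h
      · exact ⟨a, min_le_min_right _ (min_le_left _ _), h⟩
      · exact ⟨b, min_le_min_right _ (min_le_right _ _), by linarith⟩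
    refine le_trans ?_ (hf.sqrt_mul_abs_sub_le_integral hf0 hfi hx.le e)
    rw [mul_assoc]
    exact mul_le_mul_of_nonneg_left (mul_le_mul hme (by linarith) (by positivity)
      (le_min (hf0 e) zero_le_one)) (Real.sqrt_nonneg _)
  have hsqrt' : √(f x) ≤ (∫ v, f v) / (m * (|b - a| / 4)) := (le_div_iff₀ hc).2 hsqrt
  calc f x = √(f x) ^ 2 := (Real.sq_sqrt (hf0 x)).symm
    _ ≤ _ := le_max_of_le_right (pow_le_pow_left₀ (Real.sqrt_nonneg _) hsqrt' 2)

end IsLogConcave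

theorem Real.volume_add_volume_le_volume_add_of_isCompact {K L : Set ℝ} (hK : IsCompact K)
    (hL : IsCompact L) (hK₀ : K.Nonempty) (hL₀ : L.Nonempty) :
    volume K + volume L ≤ volume (K + L) := by
  set α := sSup K
  set β := sInf L
  have hα : α ∈ K := hK.sSup_mem hK₀
  have hβ : β ∈ L := hL.sInf_mem hL₀
  -- `K + β` and `α + L` lie in `K + L` and meet only at `α + β`
  have hinter : (β +ᵥ K) ∩ (α +ᵥ L) ⊆ {α + β} := by
    rintro _ ⟨⟨k, hk, rfl⟩, ⟨l, hl, hkl⟩⟩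
    have hk' : k ≤ α := le_csSup hK.bddAbove hk
    have hl' : β ≤ l := csInf_le hL.bddBelow hl
    simp only [vadd_eq_add] at hkl ⊢
    rw [mem_singleton_iff]
    linarith
  have hsub : (β +ᵥ K) ∪ (α +ᵥ L) ⊆ K + L := by
    rintro _ (⟨k, hk, rfl⟩ | ⟨l, hl, rfl⟩)
    · exact ⟨k, hk, β, hβ, add_comm _ _⟩
    · exact ⟨α, hα, l, hl, rfl⟩
  calc volume K + volume L = volume (β +ᵥ K) + volume (α +ᵥ L) := by
        rw [measure_vadd, measure_vadd]
    _ = volume ((β +ᵥ K) ∪ (α +ᵥ L)) := by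
        rw [← measure_union_add_inter _ (hL.measurableSet.const_vadd α),
          measure_mono_null hinter (measure_singleton _), add_zero]
    _ ≤ volume (K + L) := measure_mono hsub

theorem Real.volume_add_volume_le_volume_add {A B : Set ℝ} (hA : MeasurableSet A)
    (hB : MeasurableSet B) (hA₀ : A.Nonempty) (hB₀ : B.Nonempty) :
    volume A + volume B ≤ volume (A + B) := by
  obtain ⟨a, ha⟩ := hA₀
  obtain ⟨b, hb⟩ := hB₀
  rw [hA.measure_eq_iSup_isCompact, hB.measure_eq_iSup_isCompact]
  simp_rw [iSup_and']
  refine ENNReal.biSup_add_biSup_le' ⟨∅, empty_subset _, isCompact_empty⟩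
    ⟨∅, empty_subset _, isCompact_empty⟩ fun K ⟨hKA, hK⟩ L ⟨hLB, hL⟩ => ?_
  calc volume K + volume L ≤ volume (insert a K) + volume (insert b L) :=
        add_le_add (measure_mono (subset_insert _ _)) (measure_mono (subset_insert _ _))
    _ ≤ volume (insert a K + insert b L) :=
        volume_add_volume_le_volume_add_of_isCompact (hK.insert a) (hL.insert b)
          (insert_nonempty _ _) (insert_nonempty _ _)
    _ ≤ volume (A + B) :=
        measure_mono (add_subset_add (insert_subset ha hKA) (insert_subset hb hLB))

theorem ENNReal.rpow_mul_rpow_le_add {t : ℝ} (ht0 : 0 < t) (ht1 : t < 1) (a b : ℝ≥0∞) :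
    a ^ t * b ^ (1 - t) ≤ ENNReal.ofReal t * a + ENNReal.ofReal (1 - t) * b := by
  have ht1' : 0 < 1 - t := sub_pos.2 ht1
  have hpow : ∀ {s : ℝ} (c : ℝ≥0∞), 0 < s → (c ^ s) ^ (1 / s) = c := fun c hs => by
    rw [← ENNReal.rpow_mul, mul_one_div_cancel hs.ne', ENNReal.rpow_one]
  have hdiv : ∀ {s : ℝ} (c : ℝ≥0∞), 0 < s → c / ENNReal.ofReal (1 / s) = ENNReal.ofReal s * c :=
    fun c hs => by rw [one_div, ENNReal.ofReal_inv_of_pos hs, div_eq_mul_inv, inv_inv, mul_comm]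
  simpa only [hpow _ ht0, hpow _ ht1', hdiv _ ht0, hdiv _ ht1'] using
    ENNReal.young_inequality (a ^ t) (b ^ (1 - t))
      (Real.holderConjugate_one_div ht0 ht1' (add_sub_cancel t 1))

section PrekopaLeindler

variable {t : ℝ} {F G H : ℝ → ℝ}

theorem nonneg_of_rpow_mul_rpow_le (hF0 : ∀ x, 0 ≤ F x) (hG0 : ∀ x, 0 ≤ G x)
    (hFGH : ∀ a b, F a ^ t * G b ^ (1 - t) ≤ H (t * a + (1 - t) * b)) (z : ℝ) : 0 ≤ H z := by
  have h := hFGH z z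
  rw [← add_mul, add_sub_cancel, one_mul] at h
  exact (mul_nonneg (Real.rpow_nonneg (hF0 z) _) (Real.rpow_nonneg (hG0 z) _)).trans h

theorem smul_setOf_lt_add_smul_setOf_lt_subset (ht0 : 0 < t) (ht1 : t < 1)
    (hFGH : ∀ a b, F a ^ t * G b ^ (1 - t) ≤ H (t * a + (1 - t) * b)) {u : ℝ} (hu : 0 ≤ u) :
    t • {v | u < F v} + (1 - t) • {v | u < G v} ⊆ {v | u < H v} := by
  rintro _ ⟨_, ⟨a, ha, rfl⟩, _, ⟨b, hb, rfl⟩, rfl⟩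
  show u < H (t * a + (1 - t) * b)
  calc u = u ^ t * u ^ (1 - t) := by
        rw [← Real.rpow_add' hu (by norm_num), add_sub_cancel, Real.rpow_one]
    _ < F a ^ t * G b ^ (1 - t) :=
        mul_lt_mul'' (Real.rpow_lt_rpow hu ha ht0) (Real.rpow_lt_rpow hu hb (sub_pos.2 ht1))
          (Real.rpow_nonneg hu _) (Real.rpow_nonneg hu _)
    _ ≤ H (t * a + (1 - t) * b) := hFGH a b

theorem lintegral_ofReal_eq_setLIntegral_Ioo_measure_lt (hF0 : ∀ x, 0 ≤ F x)
    (hFm : AEMeasurable F) {c : ℝ} (hFc : ∀ x, F x ≤ c) :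
    ∫⁻ v, ENNReal.ofReal (F v) = ∫⁻ u in Ioo 0 c, volume {v | u < F v} := by
  rw [lintegral_eq_lintegral_meas_lt volume (Filter.Eventually.of_forall hF0) hFm,
    ← Iio_inter_Ioi, ← Measure.restrict_restrict measurableSet_Iio]
  refine (setLIntegral_eq_of_support_subset fun u hu => ?_).symm
  obtain ⟨v, hv⟩ := nonempty_of_measure_ne_zero hu
  exact hv.trans_le (hFc v)

/-- Additive form of Prékopa–Leindler: by Brunn–Minkowski each superlevel set of `H` is at least
as large as the convex combination of those of `F` and `G`; integrate over the levels. -/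
theorem add_lintegral_le_lintegral_of_isLUB (ht0 : 0 < t) (ht1 : t < 1) (hF0 : ∀ x, 0 ≤ F x)
    (hG0 : ∀ x, 0 ≤ G x) (hFm : Measurable F) (hGm : Measurable G) (hHm : AEMeasurable H)
    {c : ℝ} (hFc : IsLUB (range F) c) (hGc : IsLUB (range G) c)
    (hFGH : ∀ a b, F a ^ t * G b ^ (1 - t) ≤ H (t * a + (1 - t) * b)) :
    ENNReal.ofReal t * (∫⁻ v, ENNReal.ofReal (F v)) +
        ENNReal.ofReal (1 - t) * (∫⁻ v, ENNReal.ofReal (G v)) ≤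
      ∫⁻ v, ENNReal.ofReal (H v) := by
  have hmeas : ∀ K : ℝ → ℝ, Measurable fun u => volume {v | u < K v} := fun K =>
    Antitone.measurable fun u u' h => measure_mono fun v hv => h.trans_lt hv
  have hsmul : ∀ {s : ℝ} (S : Set ℝ), 0 ≤ s → volume (s • S) = ENNReal.ofReal s * volume S :=
    fun S hs => by rw [Measure.addHaar_smul_of_nonneg _ hs, Module.finrank_self, pow_one]
  have hlevel : ∀ u ∈ Ioo 0 c, ENNReal.ofReal t * volume {v | u < F v} +
      ENNReal.ofReal (1 - t) * volume {v | u < G v} ≤ volume {v | u < H v} := by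
    intro u hu
    obtain ⟨_, ⟨a, rfl⟩, ha, -⟩ := hFc.exists_between hu.2
    obtain ⟨_, ⟨b, rfl⟩, hb, -⟩ := hGc.exists_between hu.2
    rw [← hsmul _ ht0.le, ← hsmul _ (sub_pos.2 ht1).le]
    exact (Real.volume_add_volume_le_volume_add ((hFm measurableSet_Ioi).const_smul₀ t)
      ((hGm measurableSet_Ioi).const_smul₀ _) ⟨t • a, smul_mem_smul_set ha⟩
      ⟨(1 - t) • b, smul_mem_smul_set hb⟩).trans
      (measure_mono (smul_setOf_lt_add_smul_setOf_lt_subset ht0 ht1 hFGH hu.1.le))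
  rw [lintegral_ofReal_eq_setLIntegral_Ioo_measure_lt hF0 hFm.aemeasurable
      fun v => hFc.1 ⟨v, rfl⟩,
    lintegral_ofReal_eq_setLIntegral_Ioo_measure_lt hG0 hGm.aemeasurable
      fun v => hGc.1 ⟨v, rfl⟩,
    ← lintegral_const_mul _ (hmeas F), ← lintegral_const_mul _ (hmeas G),
    ← lintegral_add_left ((hmeas F).const_mul _),
    lintegral_eq_lintegral_meas_lt volume
      (Filter.Eventually.of_forall (nonneg_of_rpow_mul_rpow_le hF0 hG0 hFGH)) hHm]
  exact (setLIntegral_mono (hmeas H) hlevel).trans (lintegral_mono_set Ioo_subset_Ioi_self)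

theorem lintegral_rpow_mul_lintegral_rpow_le (ht0 : 0 < t) (ht1 : t < 1) (hF0 : ∀ x, 0 ≤ F x)
    (hG0 : ∀ x, 0 ≤ G x) (hFm : Measurable F) (hGm : Measurable G) (hHm : AEMeasurable H)
    (hFb : BddAbove (range F)) (hGb : BddAbove (range G))
    (hFGH : ∀ a b, F a ^ t * G b ^ (1 - t) ≤ H (t * a + (1 - t) * b)) :
    (∫⁻ v, ENNReal.ofReal (F v)) ^ t * (∫⁻ v, ENNReal.ofReal (G v)) ^ (1 - t) ≤
      ∫⁻ v, ENNReal.ofReal (H v) := by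
  have hF := isLUB_csSup (range_nonempty F) hFb
  have hG := isLUB_csSup (range_nonempty G) hGb
  set SF := sSup (range F)
  set SG := sSup (range G)
  rcases ((hF0 0).trans (hF.1 ⟨0, rfl⟩)).eq_or_lt with hSF | hSF
  · have : ∫⁻ v, ENNReal.ofReal (F v) = 0 := by
      simp [ENNReal.ofReal_eq_zero.2 ((hF.1 ⟨_, rfl⟩).trans hSF.ge)]
    rw [this, ENNReal.zero_rpow_of_pos ht0, zero_mul]
    exact zero_le
  rcases ((hG0 0).trans (hG.1 ⟨0, rfl⟩)).eq_or_lt with hSG | hSG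
  · have : ∫⁻ v, ENNReal.ofReal (G v) = 0 := by
      simp [ENNReal.ofReal_eq_zero.2 ((hG.1 ⟨_, rfl⟩).trans hSG.ge)]
    rw [this, ENNReal.zero_rpow_of_pos (sub_pos.2 ht1), mul_zero]
    exact zero_le
  -- rescale `F` to the supremum of `G`, apply the additive form, and undo the scaling by AM-GM
  set k := SG / SF
  have hk : 0 < k := div_pos hSG hSF
  have hkF : IsLUB (range fun v => k * F v) SG := by
    have := hF.mul_left hk.le
    rwa [← range_comp, div_mul_cancel₀ _ hSF.ne'] at this
  have hadd := add_lintegral_le_lintegral_of_isLUB ht0 ht1 (fun v => mul_nonneg hk.le (hF0 v))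
    hG0 (hFm.const_mul k) hGm (hHm.const_mul (k ^ t)) hkF hG fun a b => by
      rw [Real.mul_rpow hk.le (hF0 a), mul_assoc]
      exact mul_le_mul_of_nonneg_left (hFGH a b) (by positivity)
  simp only [ENNReal.ofReal_mul hk.le, ENNReal.ofReal_mul (by positivity : 0 ≤ k ^ t),
    lintegral_const_mul' _ _ ENNReal.ofReal_ne_top] at hadd
  have hk' : ENNReal.ofReal k ^ t ≠ 0 := by positivity
  rw [← ENNReal.mul_le_mul_iff_left hk' (by finiteness)]
  calc (∫⁻ v, ENNReal.ofReal (F v)) ^ t * (∫⁻ v, ENNReal.ofReal (G v)) ^ (1 - t) *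
        ENNReal.ofReal k ^ t
      = (ENNReal.ofReal k * ∫⁻ v, ENNReal.ofReal (F v)) ^ t *
          (∫⁻ v, ENNReal.ofReal (G v)) ^ (1 - t) := by
        rw [ENNReal.mul_rpow_of_nonneg _ _ ht0.le]
        ring
    _ ≤ _ := ENNReal.rpow_mul_rpow_le_add ht0 ht1 _ _
    _ ≤ _ := hadd
    _ = _ := by rw [ENNReal.ofReal_rpow_of_pos hk, mul_comm]

theorem integral_rpow_mul_integral_rpow_le (ht0 : 0 < t) (ht1 : t < 1) (hF0 : ∀ x, 0 ≤ F x)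
    (hG0 : ∀ x, 0 ≤ G x) (hFm : Measurable F) (hGm : Measurable G) (hHi : Integrable H)
    (hFb : BddAbove (range F)) (hGb : BddAbove (range G))
    (hFGH : ∀ a b, F a ^ t * G b ^ (1 - t) ≤ H (t * a + (1 - t) * b)) :
    (∫ v, F v) ^ t * (∫ v, G v) ^ (1 - t) ≤ ∫ v, H v := by
  have hH0 := nonneg_of_rpow_mul_rpow_le hF0 hG0 hFGH
  rw [integral_eq_lintegral_of_nonneg_ae (ae_of_all _ hF0) hFm.aestronglyMeasurable,
    integral_eq_lintegral_of_nonneg_ae (ae_of_all _ hG0) hGm.aestronglyMeasurable,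
    integral_eq_lintegral_of_nonneg_ae (ae_of_all _ hH0) hHi.1, ENNReal.toReal_rpow,
    ENNReal.toReal_rpow, ← ENNReal.toReal_mul]
  exact ENNReal.toReal_mono hHi.lintegral_lt_top.ne <|
    lintegral_rpow_mul_lintegral_rpow_le ht0 ht1 hF0 hG0 hFm hGm hHi.1.aemeasurable hFb hGb hFGH

end PrekopaLeindler

theorem IsLogConcave.rpow_mul_rpow_le_mul_comp_sub {f g : ℝ → ℝ} (hf0 : ∀ x, 0 ≤ f x)
    (hg0 : ∀ x, 0 ≤ g x) (hf : IsLogConcave f) (hg : IsLogConcave g) {x y t : ℝ}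
    (ht : t ∈ Icc (0 : ℝ) 1) (a b : ℝ) :
    (f (x - a) * g a) ^ t * (f (y - b) * g b) ^ (1 - t) ≤
      f ((t * x + (1 - t) * y) - (t * a + (1 - t) * b)) * g (t * a + (1 - t) * b) := by
  rw [Real.mul_rpow (hf0 _) (hg0 _), Real.mul_rpow (hf0 _) (hg0 _),
    mul_mul_mul_comm, show (t * x + (1 - t) * y) - (t * a + (1 - t) * b) =
      t * (x - a) + (1 - t) * (y - b) by ring]
  exact mul_le_mul (hf _ _ t ht) (hg a b t ht)
    (mul_nonneg (Real.rpow_nonneg (hg0 a) _) (Real.rpow_nonneg (hg0 b) _)) (hf0 _)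

/-- The convolution of two log-concave, nonnegative, integrable functions on ℝ
is log-concave. -/
theorem stmt2 (f g : ℝ → ℝ)
    (hf0 : ∀ x, 0 ≤ f x) (hg0 : ∀ x, 0 ≤ g x)
    (hfi : Integrable f) (hgi : Integrable g)
    (hf : ∀ x y : ℝ, ∀ t ∈ Set.Icc (0:ℝ) 1,
      f x ^ t * f y ^ (1 - t) ≤ f (t * x + (1 - t) * y))
    (hg : ∀ x y : ℝ, ∀ t ∈ Set.Icc (0:ℝ) 1,
      g x ^ t * g y ^ (1 - t) ≤ g (t * x + (1 - t) * y)) :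
    ∀ x y : ℝ, ∀ t ∈ Set.Icc (0:ℝ) 1,
      (∫ v, f (x - v) * g v) ^ t * (∫ v, f (y - v) * g v) ^ (1 - t)
        ≤ ∫ v, f ((t * x + (1 - t) * y) - v) * g v := by
  intro x y t ht
  rcases ht.1.eq_or_lt with rfl | ht0
  · simp
  rcases ht.2.eq_or_lt with rfl | ht1
  · simp
  have hfm := IsLogConcave.measurable hf0 hf
  obtain ⟨Mf, hMf⟩ := IsLogConcave.bddAbove_of_integrable hf0 hfi hf
  obtain ⟨Mg, hMg⟩ := IsLogConcave.bddAbove_of_integrable hg0 hgi hg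
  have hfw (w : ℝ) : Measurable fun v => f (w - v) :=
    hfm.comp (measurable_const.sub measurable_id)
  have hm (w : ℝ) : Measurable fun v => f (w - v) * g v :=
    (hfw w).mul (IsLogConcave.measurable hg0 hg)
  have hb (w : ℝ) : BddAbove (range fun v => f (w - v) * g v) := by
    refine ⟨Mf * Mg, ?_⟩
    rintro _ ⟨v, rfl⟩
    exact mul_le_mul (hMf ⟨_, rfl⟩) (hMg ⟨_, rfl⟩) (hg0 v) ((hf0 0).trans (hMf ⟨0, rfl⟩))
  have hi (w : ℝ) : Integrable fun v => f (w - v) * g v :=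
    hgi.bdd_mul (hfw w).aestronglyMeasurable
      (ae_of_all _ fun v => (Real.norm_of_nonneg (hf0 _)).trans_le (hMf ⟨_, rfl⟩))
  exact integral_rpow_mul_integral_rpow_le ht0 ht1 (fun v => mul_nonneg (hf0 _) (hg0 v))
    (fun v => mul_nonneg (hf0 _) (hg0 v)) (hm x) (hm y) (hi _) (hb x) (hb y)
    (IsLogConcave.rpow_mul_rpow_le_mul_comp_sub hf0 hg0 hf hg ⟨ht0.le, ht1.le⟩)
end

section
/- For fixed bin boundaries ℓ < u and noise standard deviation σ > 0, the negative log-likelihood z ↦ −log(Φ((u − z)/σ) − Φ((ℓ − z)/σ)) is a smooth convex function of z ∈ ℝ. -/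
open MeasureTheory

noncomputable section Stmt5Aux

open Set intervalIntegral ContDiff

namespace Stmt5

/-- The standard Gaussian density. -/
def gφ : ℝ → ℝ := fun x => (1 / Real.sqrt (2 * Real.pi)) * Real.exp (-x ^ 2 / 2)

lemma gφ_pos (x : ℝ) : 0 < gφ x := by
  have h : 0 < Real.sqrt (2 * Real.pi) := Real.sqrt_pos.2 (by positivity)
  exact mul_pos (by positivity) (Real.exp_pos _)

lemma gφ_cont : Continuous gφ := by
  unfold gφ; fun_prop

lemma gφ_hasDerivAt (x : ℝ) : HasDerivAt gφ (-x * gφ x) x := by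
  have h1 : HasDerivAt (fun y : ℝ => -y ^ 2 / 2) (-x) x := by
    refine ((hasDerivAt_pow 2 x).neg.div_const 2).congr_deriv ?_
    simp; ring
  have h2 := (Real.hasDerivAt_exp (-x ^ 2 / 2)).comp x h1
  have h3 := h2.const_mul (1 / Real.sqrt (2 * Real.pi))
  refine h3.congr_deriv ?_
  unfold gφ; simp [Function.comp]; ring

lemma gφ_integrable : Integrable gφ := by
  have h : Integrable (fun x : ℝ => Real.exp (-(1/2 : ℝ) * x ^ 2)) :=
    integrable_exp_neg_mul_sq (by norm_num)
  have h2 : (fun x : ℝ => Real.exp (-x ^ 2 / 2)) = fun x => Real.exp (-(1/2 : ℝ) * x ^ 2) := by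
    funext x; congr 1; ring
  have h3 : Integrable (fun x : ℝ => Real.exp (-x ^ 2 / 2)) := by rw [h2]; exact h
  exact h3.const_mul _

lemma gφ_intervalIntegrable (a b : ℝ) : IntervalIntegrable gφ volume a b :=
  gφ_cont.intervalIntegrable a b

/-- Complex Gaussian (unnormalized). -/
def gC : ℂ → ℂ := fun z => Complex.exp (-z ^ 2 / 2)

lemma gC_hasDerivAt (z : ℂ) : HasDerivAt gC (-z * gC z) z := by
  have h1 : HasDerivAt (fun w : ℂ => -w ^ 2 / 2) (-z) z := by
    refine ((hasDerivAt_pow 2 z).neg.div_const 2).congr_deriv ?_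
    simp
    all_goals ring
  have h2 := (Complex.hasDerivAt_exp (-z ^ 2 / 2)).comp z h1
  refine h2.congr_deriv ?_
  unfold gC; simp [Function.comp]
  all_goals ring

lemma gC_cont : Continuous gC := by
  unfold gC; fun_prop

lemma gC_norm (w : ℂ) : ‖gC w‖ ≤ Real.exp (‖w‖ ^ 2 / 2) := by
  unfold gC
  rw [Complex.norm_exp]
  apply Real.exp_le_exp.2
  have h : (-w ^ 2 / 2).re = (w.im ^ 2 - w.re ^ 2) / 2 := by
    simp [Complex.div_re, pow_two, Complex.mul_re, Complex.mul_im]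
    all_goals ring
  rw [h]
  have h2 : w.im ^ 2 ≤ ‖w‖ ^ 2 := by
    have h3 := Complex.abs_im_le_norm w
    nlinarith [norm_nonneg w, abs_nonneg w.im, sq_abs w.im]
  nlinarith [sq_nonneg w.re]

/-- Complex antiderivative of `gC`, defined as integral along the segment `[0,z]`. -/
def Fc : ℂ → ℂ := fun z => ∫ t in (0:ℝ)..1, gC ((t:ℂ) * z) * z

lemma Fc_hasDerivAt (z₀ : ℂ) : HasDerivAt Fc (gC z₀) z₀ := by
  classical
  set R : ℝ := ‖z₀‖ + 1 with hR
  have hR1 : (1:ℝ) ≤ R ∨ True := Or.inr trivial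
  set C : ℝ := (1 + R ^ 2) * Real.exp (R ^ 2 / 2) with hC
  set F' : ℂ → ℝ → ℂ := fun z t => (1 - (t:ℂ) ^ 2 * z ^ 2) * gC ((t:ℂ) * z) with hF'
  have contF : ∀ z : ℂ, Continuous fun t : ℝ => gC ((t:ℂ) * z) * z := by
    intro z
    exact ((gC_cont.comp ((Complex.continuous_ofReal).mul continuous_const)).mul continuous_const)
  have contF' : ∀ z : ℂ, Continuous fun t : ℝ => F' z t := by
    intro z
    apply Continuous.mul
    · fun_prop
    · exact gC_cont.comp ((Complex.continuous_ofReal).mul continuous_const)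
  have h_diff : ∀ᵐ t ∂(volume : Measure ℝ), t ∈ Set.uIoc (0:ℝ) 1 → ∀ x ∈ Metric.ball z₀ 1,
      HasDerivAt (fun z => gC ((t:ℂ) * z) * z) (F' x t) x := by
    refine Filter.Eventually.of_forall (fun t _ x _ => ?_)
    have hin : HasDerivAt (fun z : ℂ => (t:ℂ) * z) (t:ℂ) x := by
      simpa using (hasDerivAt_id x).const_mul (t:ℂ)
    have hgc := (gC_hasDerivAt ((t:ℂ) * x)).comp x hin
    have := hgc.mul (hasDerivAt_id x)
    refine this.congr_deriv ?_
    simp [hF', Function.comp]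
    ring
  have h_bound : ∀ᵐ t ∂(volume : Measure ℝ), t ∈ Set.uIoc (0:ℝ) 1 → ∀ x ∈ Metric.ball z₀ 1,
      ‖F' x t‖ ≤ C := by
    refine Filter.Eventually.of_forall (fun t ht x hx => ?_)
    rw [Set.uIoc_of_le (by norm_num : (0:ℝ) ≤ 1)] at ht
    have ht0 : 0 ≤ t := le_of_lt ht.1
    have ht1 : t ≤ 1 := ht.2
    have hxR : ‖x‖ ≤ R := by
      have := norm_sub_norm_le x z₀
      have hd : ‖x - z₀‖ < 1 := by simpa [dist_eq_norm] using hx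
      rw [hR]; linarith
    have htx : ‖(t:ℂ) * x‖ ≤ R := by
      rw [norm_mul, Complex.norm_real]
      have : |t| ≤ 1 := abs_le.2 ⟨by linarith, ht1⟩
      have hxn : 0 ≤ ‖x‖ := norm_nonneg _
      calc |t| * ‖x‖ ≤ 1 * R := by
            apply mul_le_mul this (by linarith) hxn (by linarith [norm_nonneg z₀])
        _ = R := one_mul R
    have h1 : ‖(1 : ℂ) - (t:ℂ) ^ 2 * x ^ 2‖ ≤ 1 + R ^ 2 := by
      calc ‖(1 : ℂ) - (t:ℂ) ^ 2 * x ^ 2‖ ≤ ‖(1:ℂ)‖ + ‖(t:ℂ) ^ 2 * x ^ 2‖ := norm_sub_le _ _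
        _ = 1 + ‖(t:ℂ) * x‖ ^ 2 := by
            rw [norm_one]
            congr 1
            rw [← norm_pow]
            congr 1
            ring
        _ ≤ 1 + R ^ 2 := by
            have := pow_le_pow_left₀ (norm_nonneg _) htx 2
            linarith
    have h2 : ‖gC ((t:ℂ) * x)‖ ≤ Real.exp (R ^ 2 / 2) := by
      refine (gC_norm _).trans (Real.exp_le_exp.2 ?_)
      nlinarith [norm_nonneg ((t:ℂ) * x), htx]
    rw [hF']
    calc ‖(1 - (t:ℂ) ^ 2 * x ^ 2) * gC ((t:ℂ) * x)‖
        = ‖(1 : ℂ) - (t:ℂ) ^ 2 * x ^ 2‖ * ‖gC ((t:ℂ) * x)‖ := norm_mul _ _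
      _ ≤ (1 + R ^ 2) * Real.exp (R ^ 2 / 2) := by
          apply mul_le_mul h1 h2 (norm_nonneg _) (by positivity)
  have key := intervalIntegral.hasDerivAt_integral_of_dominated_loc_of_deriv_le
    (F := fun z t => gC ((t:ℂ) * z) * z) (F' := F') (x₀ := z₀)
    (bound := fun _ => C) (a := (0:ℝ)) (b := 1) (s := Metric.ball z₀ 1) (Metric.ball_mem_nhds z₀ one_pos)
    (Filter.Eventually.of_forall fun x => (contF x).aestronglyMeasurable)
    ((contF z₀).intervalIntegrable 0 1)
    (contF' z₀).aestronglyMeasurable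
    h_bound
    (intervalIntegrable_const)
    h_diff
  have hval : (∫ t in (0:ℝ)..1, F' z₀ t) = gC z₀ := by
    have hFTC : ∀ t ∈ Set.uIcc (0:ℝ) 1,
        HasDerivAt (fun s : ℝ => (s:ℂ) * gC ((s:ℂ) * z₀)) (F' z₀ t) t := by
      intro t _
      have hgw : HasDerivAt (fun w : ℂ => w * gC (w * z₀))
          (gC ((t:ℂ) * z₀) + (t:ℂ) * (-(( t:ℂ) * z₀) * gC ((t:ℂ) * z₀) * z₀)) (t:ℂ) := by
        have hin : HasDerivAt (fun w : ℂ => w * z₀) z₀ (t:ℂ) := by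
          simpa using (hasDerivAt_id (t:ℂ)).mul_const z₀
        have hgc := (gC_hasDerivAt ((t:ℂ) * z₀)).comp (t:ℂ) hin
        have := (hasDerivAt_id (t:ℂ)).mul hgc
        refine this.congr_deriv ?_
        simp [Function.comp]
        all_goals ring
      have := hgw.comp_ofReal
      refine this.congr_deriv ?_
      simp [hF']
      all_goals ring
    have hcont : IntervalIntegrable (F' z₀) volume 0 1 := (contF' z₀).intervalIntegrable 0 1
    rw [intervalIntegral.integral_eq_sub_of_hasDerivAt hFTC hcont]
    simp
  rw [hval] at key
  exact key.2

lemma Fc_analyticAt (z : ℂ) : AnalyticAt ℂ Fc z := by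
  have hd : Differentiable ℂ Fc := fun w => (Fc_hasDerivAt w).differentiableAt
  exact hd.analyticAt z

/-- Real antiderivative of the (unnormalized) Gaussian. -/
def Er : ℝ → ℝ := fun x => (Fc x).re

lemma Er_hasDerivAt (x : ℝ) : HasDerivAt Er (Real.exp (-x ^ 2 / 2)) x := by
  have h2 := (Fc_hasDerivAt (x : ℂ)).real_of_complex
  refine h2.congr_deriv ?_
  unfold gC
  have : (-(x:ℂ) ^ 2 / 2) = ((-x ^ 2 / 2 : ℝ) : ℂ) := by push_cast; ring
  rw [this, ← Complex.ofReal_exp, Complex.ofReal_re]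

lemma Er_analyticAt (x : ℝ) : AnalyticAt ℝ Er x := by
  have h1 : AnalyticAt ℝ (fun y : ℝ => Fc y) x :=
    ((Fc_analyticAt (x:ℂ)).restrictScalars).comp (Complex.ofRealCLM.analyticAt x)
  exact (Complex.reCLM.analyticAt _).comp h1


/-- Key inequality: log-concavity of the Gaussian bin probability, in integral form. -/
lemma key_ineq {a b : ℝ} (hab : a ≤ b) :
    (a * gφ a - b * gφ b) * (∫ x in a..b, gφ x) ≤ (gφ a - gφ b) ^ 2 := by
  set Z := ∫ x in a..b, gφ x with hZ
  set M := ∫ x in a..b, x * gφ x with hM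
  have hMeq : M = gφ a - gφ b := by
    rw [hM]
    have hx : ∀ x ∈ Set.uIcc a b, HasDerivAt (fun y : ℝ => -gφ y) (x * gφ x) x := by
      intro x _
      have h := (gφ_hasDerivAt x).neg
      refine h.congr_deriv ?_
      ring
    rw [intervalIntegral.integral_eq_sub_of_hasDerivAt hx
      ((continuous_id.mul gφ_cont).intervalIntegrable a b)]
    ring
  have haZ : a * Z ≤ M := by
    have h0 : 0 ≤ ∫ x in a..b, (x - a) * gφ x :=
      intervalIntegral.integral_nonneg hab
        (fun x hx => mul_nonneg (by linarith [hx.1]) (gφ_pos x).le)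
    have hi1 : IntervalIntegrable (fun x : ℝ => x * gφ x) volume a b :=
      Continuous.intervalIntegrable (by exact continuous_id.mul gφ_cont) a b
    have hi2 : IntervalIntegrable (fun x : ℝ => a * gφ x) volume a b :=
      Continuous.intervalIntegrable (by exact continuous_const.mul gφ_cont) a b
    have hsplit : (∫ x in a..b, (x - a) * gφ x) = M - a * Z := by
      rw [hM, hZ, ← intervalIntegral.integral_const_mul,
        ← intervalIntegral.integral_sub hi1 hi2]
      congr 1
      funext x
      ring
    linarith
  have hbZ : M ≤ b * Z := by
    have h0 : 0 ≤ ∫ x in a..b, (b - x) * gφ x :=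
      intervalIntegral.integral_nonneg hab
        (fun x hx => mul_nonneg (by linarith [hx.2]) (gφ_pos x).le)
    have hi1 : IntervalIntegrable (fun x : ℝ => b * gφ x) volume a b :=
      Continuous.intervalIntegrable (by exact continuous_const.mul gφ_cont) a b
    have hi2 : IntervalIntegrable (fun x : ℝ => x * gφ x) volume a b :=
      Continuous.intervalIntegrable (by exact continuous_id.mul gφ_cont) a b
    have hsplit : (∫ x in a..b, (b - x) * gφ x) = b * Z - M := by
      rw [hM, hZ, ← intervalIntegral.integral_const_mul,
        ← intervalIntegral.integral_sub hi1 hi2]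
      congr 1
      funext x
      ring
    linarith
  have k1 : 0 ≤ gφ a * (M - a * Z) := mul_nonneg (gφ_pos a).le (by linarith)
  have k2 : 0 ≤ gφ b * (b * Z - M) := mul_nonneg (gφ_pos b).le (by linarith)
  have hsq : (gφ a - gφ b) ^ 2 = gφ a * M - gφ b * M := by rw [hMeq]; ring
  nlinarith [k1, k2]

end Stmt5

end Stmt5Aux

open Stmt5 in
/-- For ℓ < u and σ > 0, the negative log-likelihood
z ↦ −log(Φ((u − z)/σ) − Φ((ℓ − z)/σ)) is a smooth convex function of z. -/
theorem stmt5 (Φ : ℝ → ℝ)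
    (hΦ : ∀ a, Φ a = ∫ ν in Set.Iic a,
      (1 / Real.sqrt (2 * Real.pi)) * Real.exp (-ν ^ 2 / 2))
    (ℓ u σ : ℝ) (hσ : 0 < σ) (hlu : ℓ < u) :
    ContDiff ℝ (⊤ : ℕ∞) (fun z : ℝ => -Real.log (Φ ((u - z) / σ) - Φ ((ℓ - z) / σ))) ∧
    ConvexOn ℝ Set.univ
      (fun z : ℝ => -Real.log (Φ ((u - z) / σ) - Φ ((ℓ - z) / σ))) := by
  have hΦsub : ∀ a b : ℝ, Φ b - Φ a = ∫ x in a..b, gφ x := by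
    intro a b
    rw [hΦ a, hΦ b]
    exact intervalIntegral.integral_Iic_sub_Iic gφ_integrable.integrableOn gφ_integrable.integrableOn
  have hΦd : ∀ x : ℝ, HasDerivAt Φ (gφ x) x := by
    intro x
    have heq : Φ = fun b => Φ 0 + ∫ t in (0:ℝ)..b, gφ t := by
      funext b
      rw [← hΦsub 0 b]
      ring
    rw [heq]
    refine HasDerivAt.const_add _ ?_
    exact intervalIntegral.integral_hasDerivAt_right (gφ_intervalIntegrable 0 x)
      gφ_cont.stronglyMeasurable.stronglyMeasurableAtFilter gφ_cont.continuousAt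
  -- Φ is analytic, hence C^ω
  have hΦsmooth : ContDiff ℝ (⊤ : ℕ∞) Φ := by
    have hE : ContDiff ℝ (⊤ : ℕ∞) Er :=
      (contDiff_omega_iff_analyticOnNhd.2 (fun x _ => Er_analyticAt x)).of_le le_top
    have hΦeq2 : Φ = fun x => (Φ 0 - (1 / Real.sqrt (2 * Real.pi)) * Er 0)
        + (1 / Real.sqrt (2 * Real.pi)) * Er x := by
      have hD : ∀ x : ℝ, HasDerivAt
          (fun y => Φ y - (1 / Real.sqrt (2 * Real.pi)) * Er y) 0 x := by
        intro x
        have h := (hΦd x).sub ((Er_hasDerivAt x).const_mul (1 / Real.sqrt (2 * Real.pi)))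
        refine h.congr_deriv ?_
        unfold gφ
        ring
      have hconst : ∀ x : ℝ, Φ x - (1 / Real.sqrt (2 * Real.pi)) * Er x
          = Φ 0 - (1 / Real.sqrt (2 * Real.pi)) * Er 0 := fun x =>
        is_const_of_deriv_eq_zero (fun y => (hD y).differentiableAt)
          (fun y => (hD y).deriv) x 0
      funext x
      have := hconst x
      linarith
    rw [hΦeq2]
    exact contDiff_const.add (contDiff_const.mul hE)
  have hab : ∀ z : ℝ, (ℓ - z) / σ < (u - z) / σ := by
    intro z
    apply div_lt_div_of_pos_right ?_ hσ
    linarith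
  have hfpos : ∀ z : ℝ, 0 < Φ ((u - z) / σ) - Φ ((ℓ - z) / σ) := by
    intro z
    rw [hΦsub]
    exact intervalIntegral.intervalIntegral_pos_of_pos
      (gφ_intervalIntegrable _ _) (fun x => gφ_pos x) (hab z)
  constructor
  · -- smoothness
    have h1 : ContDiff ℝ (⊤ : ℕ∞) (fun z : ℝ => Φ ((u - z) / σ)) :=
      hΦsmooth.comp ((contDiff_const.sub contDiff_id).div_const σ)
    have h2 : ContDiff ℝ (⊤ : ℕ∞) (fun z : ℝ => Φ ((ℓ - z) / σ)) :=
      hΦsmooth.comp ((contDiff_const.sub contDiff_id).div_const σ)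
    exact ((h1.sub h2).log (fun z => (hfpos z).ne')).neg
  · -- convexity
    have hA : ∀ z : ℝ, HasDerivAt (fun y : ℝ => (ℓ - y) / σ) (-1 / σ) z := fun z =>
      ((hasDerivAt_id z).const_sub ℓ).div_const σ
    have hB : ∀ z : ℝ, HasDerivAt (fun y : ℝ => (u - y) / σ) (-1 / σ) z := fun z =>
      ((hasDerivAt_id z).const_sub u).div_const σ
    have hf' : ∀ z : ℝ, HasDerivAt (fun y : ℝ => Φ ((u - y) / σ) - Φ ((ℓ - y) / σ))
        ((gφ ((ℓ - z) / σ) - gφ ((u - z) / σ)) / σ) z := by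
      intro z
      have h1 := (hΦd ((u - z) / σ)).comp z (hB z)
      have h2 := (hΦd ((ℓ - z) / σ)).comp z (hA z)
      have h3 := h1.sub h2
      refine h3.congr_deriv ?_
      ring
    have hN : ∀ z : ℝ, HasDerivAt (fun y : ℝ => (gφ ((ℓ - y) / σ) - gφ ((u - y) / σ)) / σ)
        (((ℓ - z) / σ * gφ ((ℓ - z) / σ) - (u - z) / σ * gφ ((u - z) / σ)) / σ / σ) z := by
      intro z
      have h1 := (gφ_hasDerivAt ((ℓ - z) / σ)).comp z (hA z)
      have h2 := (gφ_hasDerivAt ((u - z) / σ)).comp z (hB z)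
      have h3 := (h1.sub h2).div_const σ
      refine h3.congr_deriv ?_
      ring
    have hg' : ∀ z : ℝ, HasDerivAt
        (fun y : ℝ => -Real.log (Φ ((u - y) / σ) - Φ ((ℓ - y) / σ)))
        (-(((gφ ((ℓ - z) / σ) - gφ ((u - z) / σ)) / σ)
          / (Φ ((u - z) / σ) - Φ ((ℓ - z) / σ)))) z := fun z =>
      ((hf' z).log (hfpos z).ne').neg
    have hderiv : deriv (fun y : ℝ => -Real.log (Φ ((u - y) / σ) - Φ ((ℓ - y) / σ)))
        = fun z : ℝ => -(((gφ ((ℓ - z) / σ) - gφ ((u - z) / σ)) / σ)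
          / (Φ ((u - z) / σ) - Φ ((ℓ - z) / σ))) := funext fun z => (hg' z).deriv
    have hg'' : ∀ z : ℝ, HasDerivAt
        (fun y : ℝ => -(((gφ ((ℓ - y) / σ) - gφ ((u - y) / σ)) / σ)
          / (Φ ((u - y) / σ) - Φ ((ℓ - y) / σ))))
        (-(((((ℓ - z) / σ * gφ ((ℓ - z) / σ) - (u - z) / σ * gφ ((u - z) / σ)) / σ / σ)
              * (Φ ((u - z) / σ) - Φ ((ℓ - z) / σ))
            - ((gφ ((ℓ - z) / σ) - gφ ((u - z) / σ)) / σ)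
              * ((gφ ((ℓ - z) / σ) - gφ ((u - z) / σ)) / σ))
          / (Φ ((u - z) / σ) - Φ ((ℓ - z) / σ)) ^ 2)) z := fun z =>
      ((hN z).div (hf' z) (hfpos z).ne').neg
    refine convexOn_univ_of_deriv2_nonneg
      (fun z => (hg' z).differentiableAt) ?_ ?_
    · rw [hderiv]
      exact fun z => (hg'' z).differentiableAt
    · intro x
      have h2eq : deriv^[2] (fun y : ℝ => -Real.log (Φ ((u - y) / σ) - Φ ((ℓ - y) / σ)))
          = deriv (deriv (fun y : ℝ => -Real.log (Φ ((u - y) / σ) - Φ ((ℓ - y) / σ)))) := by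
        rw [Function.iterate_succ, Function.iterate_one]
        rfl
      rw [h2eq, hderiv, (hg'' x).deriv]
      -- now the key inequality
      set a := (ℓ - x) / σ with ha
      set b := (u - x) / σ with hb
      have hkey := key_ineq (le_of_lt (hab x))
      have hZeq : Φ ((u - x) / σ) - Φ ((ℓ - x) / σ) = ∫ t in a..b, gφ t := hΦsub a b
      have hs2 : (0:ℝ) ≤ σ⁻¹ * σ⁻¹ := by positivity
      have h6 := mul_le_mul_of_nonneg_right hkey hs2
      have e1 : ((a * gφ a - b * gφ b) / σ / σ) * (Φ ((u - x) / σ) - Φ ((ℓ - x) / σ))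
          = ((a * gφ a - b * gφ b) * (∫ t in a..b, gφ t)) * (σ⁻¹ * σ⁻¹) := by
        rw [hZeq]
        ring
      have e2 : ((gφ a - gφ b) / σ) * ((gφ a - gφ b) / σ)
          = (gφ a - gφ b) ^ 2 * (σ⁻¹ * σ⁻¹) := by ring
      have h7 : ((a * gφ a - b * gφ b) / σ / σ) * (Φ ((u - x) / σ) - Φ ((ℓ - x) / σ))
          - ((gφ a - gφ b) / σ) * ((gφ a - gφ b) / σ) ≤ 0 := by
        rw [e1, e2]
        linarith
      have h8 : (0:ℝ) < (Φ ((u - x) / σ) - Φ ((ℓ - x) / σ)) ^ 2 := pow_pos (hfpos x) 2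
      have h9 : -((((a * gφ a - b * gφ b) / σ / σ)
              * (Φ ((u - x) / σ) - Φ ((ℓ - x) / σ))
            - ((gφ a - gφ b) / σ) * ((gφ a - gφ b) / σ))
          / (Φ ((u - x) / σ) - Φ ((ℓ - x) / σ)) ^ 2)
          = (((gφ a - gφ b) / σ) * ((gφ a - gφ b) / σ)
            - ((a * gφ a - b * gφ b) / σ / σ) * (Φ ((u - x) / σ) - Φ ((ℓ - x) / σ)))
          / (Φ ((u - x) / σ) - Φ ((ℓ - x) / σ)) ^ 2 := by ring
      rw [h9]
      exact div_nonneg (by linarith) h8.le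
end
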